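/- arXiv:1312.6502 — 5 statements merged into one kernel-verified Lean document; each statement's English description precedes it below -/
import Mathlib

section
/- Let R be a linear manifold (linear subspace, not necessarily closed) of H. Then the following are equivalent: (i) there exists an orthogonal projection P on H such that ran P ∩ R = {0} and ran(I − P) ∩ R = {0}; (ii) there exists a fundamental symmetry J on H (a bounded operator with J = J* = J⁻¹) such that J(R) ∩ R = {0}. Moreover, the correspondence is given by J = 2P − I and P = (I + J)/2. -/
/-!
Both directions rest on `J = 2P - 1` turning the two ranges of `P` into the eigenspaces of `J`
for `1` and `-1`. If `x = Jy` with `x, y ∈ R`, then `x + y = 2Py` and `y - x = 2(1 - P)y` lie in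
`ran P ∩ R` and `ran (1 - P) ∩ R`, so both vanish and `x = 0`. Conversely every vector of
`ran P ∩ R` or `ran (1 - P) ∩ R` is `±`-fixed by `J`, hence lies in `J(R) ∩ R`.
-/

section Algebra

variable {𝕜 A : Type*}

theorem IsIdempotentElem.two_smul_sub_one_mul_self [Semiring 𝕜] [Ring A] [Module 𝕜 A] {p : A}
    (hp : IsIdempotentElem p) : ((2 : 𝕜) • p - 1) * ((2 : 𝕜) • p - 1) = 1 := by
  rw [two_smul]
  simp only [mul_sub, sub_mul, mul_add, add_mul, hp.eq, mul_one, one_mul]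
  abel

variable [Field 𝕜] [Ring A] [Algebra 𝕜 A] {j : A}

theorem mul_inv_two_smul_one_add_of_mul_self_eq_one (hj : j * j = 1) :
    j * ((2 : 𝕜)⁻¹ • (1 + j)) = (2 : 𝕜)⁻¹ • (1 + j) := by
  rw [mul_smul_comm, mul_add, hj, mul_one, add_comm]

variable [NeZero (2 : 𝕜)]

theorem mul_one_sub_inv_two_smul_one_add_of_mul_self_eq_one (hj : j * j = 1) :
    j * (1 - (2 : 𝕜)⁻¹ • (1 + j)) = -(1 - (2 : 𝕜)⁻¹ • (1 + j)) := by
  rw [mul_sub, mul_one, mul_inv_two_smul_one_add_of_mul_self_eq_one hj]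
  match_scalars <;> field_simp <;> ring

theorem isIdempotentElem_inv_two_smul_one_add_of_mul_self_eq_one (hj : j * j = 1) :
    IsIdempotentElem ((2 : 𝕜)⁻¹ • (1 + j)) := by
  rw [IsIdempotentElem, smul_mul_assoc, add_mul, one_mul,
    mul_inv_two_smul_one_add_of_mul_self_eq_one hj]
  match_scalars <;> field_simp <;> ring

end Algebra

namespace Submodule

variable {𝕜 E : Type*} [AddCommGroup E]

section Ring

variable [Ring 𝕜] [Module 𝕜 E] {R : Submodule 𝕜 E} {j q : E →ₗ[𝕜] E}

theorem range_inf_eq_bot_of_mul_eq_self (hR : R.map j ⊓ R = ⊥) (h : j * q = q) :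
    LinearMap.range q ⊓ R = ⊥ := by
  rw [eq_bot_iff, ← hR]
  rintro _ ⟨⟨y, rfl⟩, hyR⟩
  exact ⟨⟨q y, hyR, LinearMap.congr_fun h y⟩, hyR⟩

theorem range_inf_eq_bot_of_mul_eq_neg (hR : R.map j ⊓ R = ⊥) (h : j * q = -q) :
    LinearMap.range q ⊓ R = ⊥ := by
  rw [eq_bot_iff, ← hR]
  rintro _ ⟨⟨y, rfl⟩, hyR⟩
  refine ⟨⟨-q y, R.neg_mem hyR, ?_⟩, hyR⟩
  simpa using congr(-$h y)

end Ring

theorem map_two_smul_sub_one_inf_eq_bot [Field 𝕜] [NeZero (2 : 𝕜)] [Module 𝕜 E]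
    {R : Submodule 𝕜 E} {p : E →ₗ[𝕜] E}
    (h₁ : LinearMap.range p ⊓ R = ⊥) (h₂ : LinearMap.range (1 - p) ⊓ R = ⊥) :
    R.map ((2 : 𝕜) • p - 1) ⊓ R = ⊥ := by
  rw [eq_bot_iff]
  rintro _ ⟨⟨y, hyR, rfl⟩, hxR⟩
  set x := ((2 : 𝕜) • p - 1) y
  have hsum : x + y = 0 := by
    refine (mem_bot 𝕜).1 (h₁ ▸ ⟨⟨(2 : 𝕜) • y, ?_⟩, R.add_mem hxR hyR⟩)
    simp [x, two_smul]
  have hdiff : y - x = 0 := by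
    refine (mem_bot 𝕜).1 (h₂ ▸ ⟨⟨(2 : 𝕜) • y, ?_⟩, R.sub_mem hyR hxR⟩)
    simp [x, two_smul]
    abel
  have h2x : (2 : 𝕜) • x = 0 := by
    rw [two_smul]
    linear_combination (norm := module) hsum - hdiff
  exact (smul_eq_zero.1 h2x).resolve_left two_ne_zero

end Submodule

section FundamentalSymmetry

variable {𝕜 H : Type*} [RCLike 𝕜] [NormedAddCommGroup H] [InnerProductSpace 𝕜 H]
  [CompleteSpace H] {R : Submodule 𝕜 H}

theorem two_smul_sub_one_of_projection_inf_eq_bot {P : H →L[𝕜] H}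
    (hP : IsSelfAdjoint P) (hP2 : P * P = P) (h₁ : LinearMap.range (P : H →ₗ[𝕜] H) ⊓ R = ⊥)
    (h₂ : LinearMap.range ((1 - P : H →L[𝕜] H) : H →ₗ[𝕜] H) ⊓ R = ⊥) :
    IsSelfAdjoint ((2 : 𝕜) • P - 1) ∧ ((2 : 𝕜) • P - 1) * ((2 : 𝕜) • P - 1) = 1 ∧
      R.map (((2 : 𝕜) • P - 1 : H →L[𝕜] H) : H →ₗ[𝕜] H) ⊓ R = ⊥ := by
  push_cast at h₂ ⊢
  exact ⟨((IsSelfAdjoint.ofNat 2).smul hP).sub (.one _),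
    IsIdempotentElem.two_smul_sub_one_mul_self hP2, R.map_two_smul_sub_one_inf_eq_bot h₁ h₂⟩

theorem inv_two_smul_one_add_of_symmetry_inf_eq_bot {J : H →L[𝕜] H} (hJ : IsSelfAdjoint J)
    (hJ2 : J * J = 1) (hR : R.map (J : H →ₗ[𝕜] H) ⊓ R = ⊥) :
    IsSelfAdjoint ((2 : 𝕜)⁻¹ • (1 + J)) ∧
      ((2 : 𝕜)⁻¹ • (1 + J)) * ((2 : 𝕜)⁻¹ • (1 + J)) = (2 : 𝕜)⁻¹ • (1 + J) ∧
      LinearMap.range (((2 : 𝕜)⁻¹ • (1 + J) : H →L[𝕜] H) : H →ₗ[𝕜] H) ⊓ R = ⊥ ∧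
      LinearMap.range ((1 - (2 : 𝕜)⁻¹ • (1 + J) : H →L[𝕜] H) : H →ₗ[𝕜] H) ⊓ R = ⊥ := by
  refine ⟨(IsSelfAdjoint.ofNat 2).inv₀.smul ((IsSelfAdjoint.one _).add hJ),
    (isIdempotentElem_inv_two_smul_one_add_of_mul_self_eq_one hJ2).eq,
    Submodule.range_inf_eq_bot_of_mul_eq_self hR ?_,
    Submodule.range_inf_eq_bot_of_mul_eq_neg hR ?_⟩
  · rw [← ContinuousLinearMap.toLinearMap_mul,
      mul_inv_two_smul_one_add_of_mul_self_eq_one hJ2]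
  · rw [← ContinuousLinearMap.toLinearMap_mul,
      mul_one_sub_inv_two_smul_one_add_of_mul_self_eq_one hJ2,
      ContinuousLinearMap.toLinearMap_neg]

end FundamentalSymmetry

theorem stmt_0_general
    {H : Type*} [NormedAddCommGroup H] [InnerProductSpace ℂ H] [CompleteSpace H]
    (R : Submodule ℂ H) :
    ((∃ P : H →L[ℂ] H, IsSelfAdjoint P ∧ P * P = P ∧
        LinearMap.range (P : H →ₗ[ℂ] H) ⊓ R = ⊥ ∧ LinearMap.range ((1 - P : H →L[ℂ] H) : H →ₗ[ℂ] H) ⊓ R = ⊥) ↔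
      (∃ J : H →L[ℂ] H, IsSelfAdjoint J ∧ J * J = 1 ∧ R.map (J : H →ₗ[ℂ] H) ⊓ R = ⊥)) ∧
    (∀ P : H →L[ℂ] H, IsSelfAdjoint P → P * P = P →
        LinearMap.range (P : H →ₗ[ℂ] H) ⊓ R = ⊥ → LinearMap.range ((1 - P : H →L[ℂ] H) : H →ₗ[ℂ] H) ⊓ R = ⊥ →
        IsSelfAdjoint ((2 : ℂ) • P - 1) ∧
          ((2 : ℂ) • P - 1) * ((2 : ℂ) • P - 1) = 1 ∧
          R.map (((2 : ℂ) • P - 1 : H →L[ℂ] H) : H →ₗ[ℂ] H) ⊓ R = ⊥) ∧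
    (∀ J : H →L[ℂ] H, IsSelfAdjoint J → J * J = 1 → R.map (J : H →ₗ[ℂ] H) ⊓ R = ⊥ →
        IsSelfAdjoint ((2 : ℂ)⁻¹ • (1 + J)) ∧
          ((2 : ℂ)⁻¹ • (1 + J)) * ((2 : ℂ)⁻¹ • (1 + J)) = (2 : ℂ)⁻¹ • (1 + J) ∧
          LinearMap.range (((2 : ℂ)⁻¹ • (1 + J) : H →L[ℂ] H) : H →ₗ[ℂ] H) ⊓ R = ⊥ ∧
          LinearMap.range ((1 - (2 : ℂ)⁻¹ • (1 + J) : H →L[ℂ] H) : H →ₗ[ℂ] H) ⊓ R = ⊥) := by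
  refine ⟨⟨fun ⟨P, hP, hP2, h₁, h₂⟩ => ?_, fun ⟨J, hJ, hJ2, hR⟩ => ?_⟩,
    fun _ => two_smul_sub_one_of_projection_inf_eq_bot,
    fun _ => inv_two_smul_one_add_of_symmetry_inf_eq_bot⟩
  · exact ⟨(2 : ℂ) • P - 1, two_smul_sub_one_of_projection_inf_eq_bot hP hP2 h₁ h₂⟩
  · exact ⟨(2 : ℂ)⁻¹ • (1 + J), inv_two_smul_one_add_of_symmetry_inf_eq_bot hJ hJ2 hR⟩

/-- Around the Van Daele–Schmüdgen theorem, Proposition 3.1: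
for a linear manifold `R` in a Hilbert space `H`, the existence of an orthogonal
projection `P` with `ran P ∩ R = {0}` and `ran (I - P) ∩ R = {0}` is equivalent to the
existence of a fundamental symmetry `J` with `J(R) ∩ R = {0}`; the correspondence is
`J = 2P - I` and `P = (I + J)/2`. -/
theorem stmt_0
    {H : Type*} [NormedAddCommGroup H] [InnerProductSpace ℂ H] [CompleteSpace H]
    [TopologicalSpace.SeparableSpace H] (hinf : ¬ FiniteDimensional ℂ H)
    (R : Submodule ℂ H) :
    ((∃ P : H →L[ℂ] H, IsSelfAdjoint P ∧ P * P = P ∧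
        LinearMap.range (P : H →ₗ[ℂ] H) ⊓ R = ⊥ ∧ LinearMap.range ((1 - P : H →L[ℂ] H) : H →ₗ[ℂ] H) ⊓ R = ⊥) ↔
      (∃ J : H →L[ℂ] H, IsSelfAdjoint J ∧ J * J = 1 ∧ R.map (J : H →ₗ[ℂ] H) ⊓ R = ⊥)) ∧
    (∀ P : H →L[ℂ] H, IsSelfAdjoint P → P * P = P →
        LinearMap.range (P : H →ₗ[ℂ] H) ⊓ R = ⊥ → LinearMap.range ((1 - P : H →L[ℂ] H) : H →ₗ[ℂ] H) ⊓ R = ⊥ →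
        IsSelfAdjoint ((2 : ℂ) • P - 1) ∧
          ((2 : ℂ) • P - 1) * ((2 : ℂ) • P - 1) = 1 ∧
          R.map (((2 : ℂ) • P - 1 : H →L[ℂ] H) : H →ₗ[ℂ] H) ⊓ R = ⊥) ∧
    (∀ J : H →L[ℂ] H, IsSelfAdjoint J → J * J = 1 → R.map (J : H →ₗ[ℂ] H) ⊓ R = ⊥ →
        IsSelfAdjoint ((2 : ℂ)⁻¹ • (1 + J)) ∧
          ((2 : ℂ)⁻¹ • (1 + J)) * ((2 : ℂ)⁻¹ • (1 + J)) = (2 : ℂ)⁻¹ • (1 + J) ∧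
          LinearMap.range (((2 : ℂ)⁻¹ • (1 + J) : H →L[ℂ] H) : H →ₗ[ℂ] H) ⊓ R = ⊥ ∧
          LinearMap.range ((1 - (2 : ℂ)⁻¹ • (1 + J) : H →L[ℂ] H) : H →ₗ[ℂ] H) ⊓ R = ⊥) :=
  stmt_0_general R
end

section
/- Let A ∈ B₀⁺(H) with ran A ≠ H, let M be a closed subspace of H, set A₁ := A^{1/2} P_M A^{1/2}, and assume ker A₁ = {0}. Then for all u, v ∈ H with A₁^{1/2} u = A^{1/2} v one has ‖u‖ = ‖v‖; that is, ‖A₁^{-1/2} h‖ = ‖A^{-1/2} h‖ for every h ∈ ran A₁^{1/2}. -/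
/-!
Write `S = A^{1/2}` and `B = A₁^{1/2}`. Since `B² = (P S)† (P S)`, the map `B x ↦ P S x` is an
isometry on `ran B`, which is dense because `B` is self-adjoint and injective; it extends to an
isometry `V` on `H` with values in `ran P`. Testing `B u = S v` against `S z` gives `S (V u) = S v`,
so `v = V u` by injectivity of `S`, and `‖v‖ = ‖u‖`.
-/

open scoped InnerProductSpace

section
variable {𝕜 E F G : Type*} [RCLike 𝕜]
  [NormedAddCommGroup E] [InnerProductSpace 𝕜 E]
  [NormedAddCommGroup F] [InnerProductSpace 𝕜 F]
  [NormedAddCommGroup G] [InnerProductSpace 𝕜 G] [CompleteSpace G]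

/-- `y` is the image of `u` under the continuous extension of the isometry `B x ↦ T x`. -/
theorem LinearMap.exists_mem_closure_range_inner_eq_of_inner_map_map_eq
    (B : E →ₗ[𝕜] F) (T : E →ₗ[𝕜] G) (h : ∀ x y, ⟪T x, T y⟫_𝕜 = ⟪B x, B y⟫_𝕜)
    {u : F} (hu : u ∈ closure (Set.range B)) :
    ∃ y ∈ closure (Set.range T), ‖y‖ = ‖u‖ ∧ ∀ z, ⟪T z, y⟫_𝕜 = ⟪B z, u⟫_𝕜 := by
  obtain ⟨b, hb, hbu⟩ := mem_closure_iff_seq_limit.mp hu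
  choose w hw using hb
  obtain rfl : (fun n ↦ B (w n)) = b := funext hw
  have hnorm (x : E) : ‖T x‖ = ‖B x‖ := by
    rw [norm_eq_sqrt_re_inner (𝕜 := 𝕜), norm_eq_sqrt_re_inner (𝕜 := 𝕜), h]
  have hdist (m n : ℕ) : dist (T (w m)) (T (w n)) = dist (B (w m)) (B (w n)) := by
    rw [dist_eq_norm, dist_eq_norm, ← map_sub, ← map_sub, hnorm]
  have hcauchy : CauchySeq (fun n ↦ T (w n)) := by
    have := hbu.cauchySeq
    rw [Metric.cauchySeq_iff] at this ⊢
    simpa only [hdist] using this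
  obtain ⟨y, hy⟩ := cauchySeq_tendsto_of_complete hcauchy
  refine ⟨y, mem_closure_of_tendsto hy (.of_forall fun n ↦ ⟨w n, rfl⟩),
    tendsto_nhds_unique (by simpa only [hnorm] using hy.norm) hbu.norm, fun z ↦ ?_⟩
  refine tendsto_nhds_unique (tendsto_const_nhds.inner hy) ?_
  simpa only [h] using tendsto_const_nhds.inner hbu

end

section
open ContinuousLinearMap InnerProduct

variable {𝕜 E F G : Type*} [RCLike 𝕜]
  [NormedAddCommGroup E] [InnerProductSpace 𝕜 E] [CompleteSpace E]
  [NormedAddCommGroup F] [InnerProductSpace 𝕜 F] [CompleteSpace F]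
  [NormedAddCommGroup G] [InnerProductSpace 𝕜 G] [CompleteSpace G]

theorem ContinuousLinearMap.inner_map_map_eq_of_adjoint_comp_self_eq
    {B : E →L[𝕜] F} {T : E →L[𝕜] G} (h : T† ∘L T = B† ∘L B) (x y : E) :
    ⟪T x, T y⟫_𝕜 = ⟪B x, B y⟫_𝕜 := by
  rw [← adjoint_inner_right, ← adjoint_inner_right B, ← comp_apply, h, comp_apply]

theorem IsSelfAdjoint.denseRange_of_injective {B : E →L[𝕜] E} (hB : IsSelfAdjoint B)
    (hinj : Function.Injective B) : DenseRange B := by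
  have : (B : E →ₗ[𝕜] E).range.topologicalClosure = ⊤ := by
    rw [Submodule.topologicalClosure_eq_top_iff, B.orthogonal_range, hB.adjoint_eq]
    exact LinearMap.ker_eq_bot.mpr hinj
  exact Submodule.dense_iff_topologicalClosure_eq_top.mpr this

end

theorem stmt_2_general
    {H : Type*} [NormedAddCommGroup H] [InnerProductSpace ℂ H] [CompleteSpace H]
    (A sqrtA sqrtA1 : H →L[ℂ] H)
    (hAker : LinearMap.ker (A : H →ₗ[ℂ] H) = ⊥)
    (hsqrtA : sqrtA.IsPositive) (hsqrtA2 : sqrtA * sqrtA = A)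
    (P : H →L[ℂ] H) (hP : IsSelfAdjoint P) (hPidem : P * P = P)
    (hsqrtA1 : sqrtA1.IsPositive) (hsqrtA12 : sqrtA1 * sqrtA1 = sqrtA * P * sqrtA)
    (hker : LinearMap.ker ((sqrtA * P * sqrtA : H →L[ℂ] H) : H →ₗ[ℂ] H) = ⊥) :
    ∀ u v : H, sqrtA1 u = sqrtA v → ‖u‖ = ‖v‖ := by
  intro u v huv
  have hS : IsSelfAdjoint sqrtA := hsqrtA.isSelfAdjoint
  have hB : IsSelfAdjoint sqrtA1 := hsqrtA1.isSelfAdjoint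
  have hS_inj : Function.Injective sqrtA := by
    have hA_inj : Function.Injective (sqrtA * sqrtA) := hsqrtA2 ▸ LinearMap.ker_eq_bot.mp hAker
    exact hA_inj.of_comp (f := sqrtA)
  have hB_inj : Function.Injective sqrtA1 := by
    have hBB_inj : Function.Injective (sqrtA1 * sqrtA1) :=
      hsqrtA12 ▸ LinearMap.ker_eq_bot.mp hker
    exact hBB_inj.of_comp (f := sqrtA1)
  have hinner : ∀ x y, ⟪(P * sqrtA) x, (P * sqrtA) y⟫_ℂ = ⟪sqrtA1 x, sqrtA1 y⟫_ℂ := by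
    refine ContinuousLinearMap.inner_map_map_eq_of_adjoint_comp_self_eq ?_
    simp only [← ContinuousLinearMap.star_eq_adjoint, ← ContinuousLinearMap.mul_def, star_mul,
      hS.star_eq, hP.star_eq, hB.star_eq, hsqrtA12]
    rw [mul_assoc, ← mul_assoc P, hPidem, mul_assoc]
  obtain ⟨y, hy_mem, hy_norm, hy_inner⟩ :=
    LinearMap.exists_mem_closure_range_inner_eq_of_inner_map_map_eq sqrtA1.toLinearMap
      (P * sqrtA).toLinearMap hinner (hB.denseRange_of_injective hB_inj u)
  have hPy : P y = y := by
    refine (LinearMap.IsIdempotentElem.mem_range_iff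
      (ContinuousLinearMap.IsIdempotentElem.toLinearMap hPidem)).mp
      (closure_minimal ?_ (ContinuousLinearMap.IsIdempotentElem.isClosed_range hPidem) hy_mem)
    rintro _ ⟨x, rfl⟩
    exact ⟨sqrtA x, rfl⟩
  have : sqrtA y = sqrtA v := by
    refine ext_inner_left ℂ fun z ↦ ?_
    calc ⟪z, sqrtA y⟫_ℂ = ⟪sqrtA z, P y⟫_ℂ := by rw [hPy]; exact (hS.isSymmetric z y).symm
      _ = ⟪P (sqrtA z), y⟫_ℂ := (hP.isSymmetric _ _).symm
      _ = ⟪sqrtA1 z, u⟫_ℂ := hy_inner z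
      _ = ⟪z, sqrtA v⟫_ℂ := huv ▸ hB.isSymmetric z u
  rw [← hS_inj this, hy_norm]

/-- Proposition 3.2 (1)(b), equation (3.1): for `A ∈ B₀⁺(H)` with `ran A ≠ H`, a closed
subspace `M` with orthogonal projection `P`, and `A₁ := A^{1/2} P A^{1/2}` with
`ker A₁ = {0}`, one has `‖A₁^{-1/2} h‖ = ‖A^{-1/2} h‖` for every `h ∈ ran A₁^{1/2}`;
i.e. whenever `A₁^{1/2} u = A^{1/2} v` then `‖u‖ = ‖v‖`. -/
theorem stmt_2
    {H : Type*} [NormedAddCommGroup H] [InnerProductSpace ℂ H] [CompleteSpace H]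
    [TopologicalSpace.SeparableSpace H] (hinf : ¬ FiniteDimensional ℂ H)
    (A sqrtA sqrtA1 : H →L[ℂ] H)
    (hA : A.IsPositive) (hAker : LinearMap.ker (A : H →ₗ[ℂ] H) = ⊥) (hAran : LinearMap.range (A : H →ₗ[ℂ] H) ≠ ⊤)
    (hsqrtA : sqrtA.IsPositive) (hsqrtA2 : sqrtA * sqrtA = A)
    (M : Submodule ℂ H) (hMc : IsClosed (M : Set H))
    (P : H →L[ℂ] H) (hP : IsSelfAdjoint P) (hPidem : P * P = P)
    (hPran : LinearMap.range (P : H →ₗ[ℂ] H) = M)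
    (hsqrtA1 : sqrtA1.IsPositive) (hsqrtA12 : sqrtA1 * sqrtA1 = sqrtA * P * sqrtA)
    (hker : LinearMap.ker ((sqrtA * P * sqrtA : H →L[ℂ] H) : H →ₗ[ℂ] H) = ⊥) :
    ∀ u v : H, sqrtA1 u = sqrtA v → ‖u‖ = ‖v‖ :=
  stmt_2_general A sqrtA sqrtA1 hAker hsqrtA hsqrtA2 P hP hPidem hsqrtA1 hsqrtA12 hker
end

section
/- Let A ∈ B₀⁺(H) with ran A ≠ H, and let P₁ and P₂ be orthogonal projections on H such that ran P_k ∩ ran A^{1/2} = {0} and ran(I − P_k) ∩ ran A^{1/2} = {0} for k = 1, 2. Define A₁ := A^{1/2} P₁ A^{1/2} and A₂ := A₁^{1/2} P₂ A₁^{1/2}. Then there exists an orthogonal projection P₁₂ on H such that A₂ = A^{1/2} P₁₂ A^{1/2}, and this projection satisfies ran P₁₂ ∩ ran A^{1/2} = {0} and ran(I − P₁₂) ∩ ran A^{1/2} = {0}. -/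
/-!
Since `A₁ = (P₁ A^{1/2})† (P₁ A^{1/2})`, the map `A₁^{1/2} x ↦ P₁ A^{1/2} x` is isometric.
The condition on `ran (I - P₁)` makes `A₁^{1/2}` injective, hence of dense range, so this map
extends to an isometry `V` with `P₁ V = V`; taking adjoints gives `V† A^{1/2} = A₁^{1/2} = A^{1/2} V`.
Then `P₁₂ := V P₂ V†` works: `V†` intertwines `P₁₂` with `P₂` (and `I - P₁₂` with `I - P₂`) and maps
`ran A^{1/2}` injectively into itself, so trivial intersections with `ran A^{1/2}` pass from `P₂`
to `P₁₂`.
-/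

open ContinuousLinearMap Function

section StarRing

variable {R : Type*} [Ring R] [StarRing R]

theorem IsStarProjection.mul_mul_star_of_star_mul_self {p v : R} (hp : IsStarProjection p)
    (hv : star v * v = 1) : IsStarProjection (v * p * star v) := by
  refine ⟨?_, ?_⟩
  · calc v * p * star v * (v * p * star v) = v * (p * (star v * v) * p) * star v := by
          simp only [mul_assoc]
      _ = v * p * star v := by rw [hv, mul_one, hp.isIdempotentElem.eq]
  · simp only [IsSelfAdjoint, star_mul, star_star, hp.isSelfAdjoint.star_eq, mul_assoc]

theorem star_mul_eq_of_mul_eq {p v s t : R} (hp : IsSelfAdjoint p) (hv : star v * v = 1)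
    (hpv : p * v = v) (h : v * t = p * s) : star v * s = t := by
  calc star v * s = star (p * v) * s := by rw [hpv]
    _ = star v * (p * s) := by rw [star_mul, hp.star_eq, mul_assoc]
    _ = t := by rw [← h, ← mul_assoc, hv, one_mul]

end StarRing

section RangeInf

variable {R M : Type*} [Ring R] [TopologicalSpace M] [AddCommGroup M] [Module R M]

theorem ContinuousLinearMap.injective_mul_of_range_one_sub_inf_eq_bot [IsTopologicalAddGroup M]
    {P S : M →L[R] M} (hS : Injective S)
    (h : LinearMap.range ((1 - P : M →L[R] M) : M →ₗ[R] M) ⊓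
      LinearMap.range (S : M →ₗ[R] M) = ⊥) :
    Injective (P * S) := by
  refine (injective_iff_map_eq_zero _).mpr fun x hx ↦ (injective_iff_map_eq_zero S).mp hS x ?_
  have hmem : S x ∈ LinearMap.range ((1 - P : M →L[R] M) : M →ₗ[R] M) ⊓
      LinearMap.range (S : M →ₗ[R] M) :=
    ⟨⟨S x, by simp [show P (S x) = 0 from hx]⟩, ⟨x, rfl⟩⟩
  rwa [h, Submodule.mem_bot] at hmem

theorem ContinuousLinearMap.range_inf_eq_bot_of_intertwining {P Q S U W : M →L[R] M}
    (hWQ : W * Q = P * W) (hWS : W * S = S * U) (hinj : Injective (W * S))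
    (h : LinearMap.range (P : M →ₗ[R] M) ⊓ LinearMap.range (S : M →ₗ[R] M) = ⊥) :
    LinearMap.range (Q : M →ₗ[R] M) ⊓ LinearMap.range (S : M →ₗ[R] M) = ⊥ := by
  refine (Submodule.eq_bot_iff _).mpr ?_
  rintro _ ⟨⟨y, rfl⟩, ⟨x, hx⟩⟩
  rw [coe_coe, coe_coe] at hx
  have hWx : W (S x) ∈ LinearMap.range (P : M →ₗ[R] M) ⊓ LinearMap.range (S : M →ₗ[R] M) := by
    refine ⟨⟨W y, ?_⟩, ⟨U x, ?_⟩⟩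
    · rw [coe_coe, hx]
      exact (DFunLike.congr_fun hWQ y).symm
    · exact (DFunLike.congr_fun hWS x).symm
  rw [h, Submodule.mem_bot] at hWx
  simp [← hx, (injective_iff_map_eq_zero _).mp hinj x hWx]

end RangeInf

section Isometry

variable {𝕜 E F G : Type*} [NontriviallyNormedField 𝕜]
  [NormedAddCommGroup E] [NormedSpace 𝕜 E] [NormedAddCommGroup F] [NormedSpace 𝕜 F]
  [NormedAddCommGroup G] [NormedSpace 𝕜 G] [CompleteSpace G]

theorem ContinuousLinearMap.exists_norm_map_comp_eq_of_norm_apply_eq {S : E →L[𝕜] F}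
    {T : E →L[𝕜] G} (hS : DenseRange S) (hST : ∀ x, ‖T x‖ = ‖S x‖) :
    ∃ V : F →L[𝕜] G, (∀ y, ‖V y‖ = ‖y‖) ∧ V ∘L S = T := by
  set V := (T : E →ₗ[𝕜] G).extendOfNorm (S : E →ₗ[𝕜] F)
  have hV (x : E) : V (S x) = T x :=
    LinearMap.extendOfNorm_eq hS ⟨1, fun x ↦ by simp [hST]⟩ x
  refine ⟨V, fun y ↦ ?_, ext hV⟩
  refine hS.induction_on y (isClosed_eq (by fun_prop) (by fun_prop)) fun x ↦ ?_
  rw [hV, hST]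

end Isometry

section InnerProduct

variable {𝕜 E F : Type*} [RCLike 𝕜] [NormedAddCommGroup E] [InnerProductSpace 𝕜 E]
  [CompleteSpace E] [NormedAddCommGroup F] [InnerProductSpace 𝕜 F] [CompleteSpace F]

theorem ContinuousLinearMap.norm_apply_eq_of_adjoint_comp_self_eq {S T : E →L[𝕜] F}
    (h : adjoint S ∘L S = adjoint T ∘L T) (x : E) : ‖S x‖ = ‖T x‖ := by
  rw [apply_norm_eq_sqrt_inner_adjoint_left, apply_norm_eq_sqrt_inner_adjoint_left, h]

theorem IsStarNormal.denseRange_of_injective {T : E →L[𝕜] E} (hT : IsStarNormal T)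
    (hinj : Injective T) : DenseRange T := by
  change Dense (LinearMap.range (T : E →ₗ[𝕜] E) : Set E)
  rw [Submodule.dense_iff_topologicalClosure_eq_top,
    Submodule.topologicalClosure_eq_top_iff]
  exact hT.orthogonal_range.trans (LinearMap.ker_eq_bot.mpr hinj)

variable {P S S₁ : E →L[𝕜] E}

theorem norm_apply_eq_of_mul_self_eq (hP : IsStarProjection P) (hS : IsSelfAdjoint S)
    (hS₁ : IsSelfAdjoint S₁) (h : S₁ * S₁ = S * P * S) (x : E) : ‖S₁ x‖ = ‖(P * S) x‖ := by
  refine norm_apply_eq_of_adjoint_comp_self_eq ?_ x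
  simp only [← star_eq_adjoint, ← mul_def, star_mul, hS.star_eq, hS₁.star_eq,
    hP.isSelfAdjoint.star_eq, h, mul_assoc]
  rw [← mul_assoc P P, hP.isIdempotentElem.eq]

/-- The polar decomposition `P S = V S₁` of `P S`, with an isometry `V`. -/
theorem exists_star_mul_self_eq_one_and_star_mul_eq_of_mul_self_eq (hP : IsStarProjection P)
    (hS : IsSelfAdjoint S) (hS₁ : IsSelfAdjoint S₁) (h : S₁ * S₁ = S * P * S)
    (hinj : Injective S₁) :
    ∃ V : E →L[𝕜] E, star V * V = 1 ∧ star V * S = S₁ := by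
  have hdense := hS₁.isStarNormal.denseRange_of_injective hinj
  obtain ⟨V, hV_norm, hV⟩ := exists_norm_map_comp_eq_of_norm_apply_eq hdense
    fun x ↦ (norm_apply_eq_of_mul_self_eq hP hS hS₁ h x).symm
  replace hV : V * S₁ = P * S := hV
  have hVV : star V * V = 1 := (norm_map_iff_adjoint_comp_self V).mp hV_norm
  have hPV : P * V = V := by
    refine DFunLike.coe_injective (hdense.equalizer (P * V).continuous V.continuous ?_)
    change ⇑(P * V * S₁) = ⇑(V * S₁)
    rw [mul_assoc, hV, ← mul_assoc, hP.isIdempotentElem.eq]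
  exact ⟨V, hVV, star_mul_eq_of_mul_eq hP.isSelfAdjoint hVV hPV hV⟩

end InnerProduct

theorem stmt_3_general
    {H : Type*} [NormedAddCommGroup H] [InnerProductSpace ℂ H] [CompleteSpace H]
    (A sqrtA sqrtA1 : H →L[ℂ] H)
    (hAker : LinearMap.ker (A : H →ₗ[ℂ] H) = ⊥)
    (hsqrtA : sqrtA.IsPositive) (hsqrtA2 : sqrtA * sqrtA = A)
    (P₁ P₂ : H →L[ℂ] H)
    (hP₁ : IsSelfAdjoint P₁) (hP₁idem : P₁ * P₁ = P₁)
    (hP₂ : IsSelfAdjoint P₂) (hP₂idem : P₂ * P₂ = P₂)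
    (h₁' : LinearMap.range ((1 - P₁ : H →L[ℂ] H) : H →ₗ[ℂ] H) ⊓ LinearMap.range (sqrtA : H →ₗ[ℂ] H) = ⊥)
    (h₂ : LinearMap.range (P₂ : H →ₗ[ℂ] H) ⊓ LinearMap.range (sqrtA : H →ₗ[ℂ] H) = ⊥)
    (h₂' : LinearMap.range ((1 - P₂ : H →L[ℂ] H) : H →ₗ[ℂ] H) ⊓ LinearMap.range (sqrtA : H →ₗ[ℂ] H) = ⊥)
    (hsqrtA1 : sqrtA1.IsPositive) (hsqrtA12 : sqrtA1 * sqrtA1 = sqrtA * P₁ * sqrtA) :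
    ∃ P₁₂ : H →L[ℂ] H, IsSelfAdjoint P₁₂ ∧ P₁₂ * P₁₂ = P₁₂ ∧
      sqrtA1 * P₂ * sqrtA1 = sqrtA * P₁₂ * sqrtA ∧
      LinearMap.range (P₁₂ : H →ₗ[ℂ] H) ⊓ LinearMap.range (sqrtA : H →ₗ[ℂ] H) = ⊥ ∧
      LinearMap.range ((1 - P₁₂ : H →L[ℂ] H) : H →ₗ[ℂ] H) ⊓ LinearMap.range (sqrtA : H →ₗ[ℂ] H) = ⊥ := by
  have hs : IsSelfAdjoint sqrtA := hsqrtA.isSelfAdjoint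
  have hs₁ : IsSelfAdjoint sqrtA1 := hsqrtA1.isSelfAdjoint
  have hP₁' : IsStarProjection P₁ := isStarProjection_iff'.mpr ⟨hP₁idem, hP₁.star_eq⟩
  have hP₂' : IsStarProjection P₂ := isStarProjection_iff'.mpr ⟨hP₂idem, hP₂.star_eq⟩
  have hs_inj : Injective sqrtA := by
    have hA_inj : Injective (sqrtA * sqrtA) := hsqrtA2 ▸ LinearMap.ker_eq_bot.mp hAker
    exact Injective.of_comp (f := sqrtA) hA_inj
  have hs₁_inj : Injective sqrtA1 := fun x y hxy ↦
    injective_mul_of_range_one_sub_inf_eq_bot hs_inj h₁' <| by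
      rw [← sub_eq_zero, ← map_sub, ← norm_eq_zero,
        ← norm_apply_eq_of_mul_self_eq hP₁' hs hs₁ hsqrtA12, map_sub, hxy, sub_self, norm_zero]
  obtain ⟨V, hVV, hWs⟩ :=
    exists_star_mul_self_eq_one_and_star_mul_eq_of_mul_self_eq hP₁' hs hs₁ hsqrtA12 hs₁_inj
  have hs₁V : sqrtA1 = sqrtA * V := by
    rw [← hs₁.star_eq, ← hWs, star_mul, star_star, hs.star_eq]
  have hWQ : star V * (V * P₂ * star V) = P₂ * star V := by
    rw [← mul_assoc, ← mul_assoc, hVV, one_mul]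
  have hQ := hP₂'.mul_mul_star_of_star_mul_self hVV
  refine ⟨V * P₂ * star V, hQ.isSelfAdjoint, hQ.isIdempotentElem.eq, ?_,
    range_inf_eq_bot_of_intertwining hWQ (hWs.trans hs₁V) (hWs ▸ hs₁_inj) h₂,
    range_inf_eq_bot_of_intertwining ?_ (hWs.trans hs₁V) (hWs ▸ hs₁_inj) h₂'⟩
  · calc sqrtA1 * P₂ * sqrtA1 = sqrtA * V * P₂ * (star V * sqrtA) := by rw [← hs₁V, hWs]
      _ = sqrtA * (V * P₂ * star V) * sqrtA := by simp only [mul_assoc]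
  · rw [mul_sub, sub_mul, mul_one, one_mul, hWQ]

/-- Proposition 3.3: for `A ∈ B₀⁺(H)` with `ran A ≠ H` and orthogonal projections
`P₁, P₂` whose ranges and co-ranges intersect `ran A^{1/2}` trivially, setting
`A₁ := A^{1/2} P₁ A^{1/2}` and `A₂ := A₁^{1/2} P₂ A₁^{1/2}`, there is an orthogonal
projection `P₁₂` with `A₂ = A^{1/2} P₁₂ A^{1/2}` whose range and co-range also
intersect `ran A^{1/2}` trivially. -/
theorem stmt_3
    {H : Type*} [NormedAddCommGroup H] [InnerProductSpace ℂ H] [CompleteSpace H]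
    [TopologicalSpace.SeparableSpace H] (hinf : ¬ FiniteDimensional ℂ H)
    (A sqrtA sqrtA1 : H →L[ℂ] H)
    (hA : A.IsPositive) (hAker : LinearMap.ker (A : H →ₗ[ℂ] H) = ⊥) (hAran : LinearMap.range (A : H →ₗ[ℂ] H) ≠ ⊤)
    (hsqrtA : sqrtA.IsPositive) (hsqrtA2 : sqrtA * sqrtA = A)
    (P₁ P₂ : H →L[ℂ] H)
    (hP₁ : IsSelfAdjoint P₁) (hP₁idem : P₁ * P₁ = P₁)
    (hP₂ : IsSelfAdjoint P₂) (hP₂idem : P₂ * P₂ = P₂)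
    (h₁ : LinearMap.range (P₁ : H →ₗ[ℂ] H) ⊓ LinearMap.range (sqrtA : H →ₗ[ℂ] H) = ⊥)
    (h₁' : LinearMap.range ((1 - P₁ : H →L[ℂ] H) : H →ₗ[ℂ] H) ⊓ LinearMap.range (sqrtA : H →ₗ[ℂ] H) = ⊥)
    (h₂ : LinearMap.range (P₂ : H →ₗ[ℂ] H) ⊓ LinearMap.range (sqrtA : H →ₗ[ℂ] H) = ⊥)
    (h₂' : LinearMap.range ((1 - P₂ : H →L[ℂ] H) : H →ₗ[ℂ] H) ⊓ LinearMap.range (sqrtA : H →ₗ[ℂ] H) = ⊥)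
    (hsqrtA1 : sqrtA1.IsPositive) (hsqrtA12 : sqrtA1 * sqrtA1 = sqrtA * P₁ * sqrtA) :
    ∃ P₁₂ : H →L[ℂ] H, IsSelfAdjoint P₁₂ ∧ P₁₂ * P₁₂ = P₁₂ ∧
      sqrtA1 * P₂ * sqrtA1 = sqrtA * P₁₂ * sqrtA ∧
      LinearMap.range (P₁₂ : H →ₗ[ℂ] H) ⊓ LinearMap.range (sqrtA : H →ₗ[ℂ] H) = ⊥ ∧
      LinearMap.range ((1 - P₁₂ : H →L[ℂ] H) : H →ₗ[ℂ] H) ⊓ LinearMap.range (sqrtA : H →ₗ[ℂ] H) = ⊥ :=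
  stmt_3_general A sqrtA sqrtA1 hAker hsqrtA hsqrtA2 P₁ P₂ hP₁ hP₁idem hP₂ hP₂idem h₁' h₂ h₂'
    hsqrtA1 hsqrtA12
end

section
/- Let F, G ∈ B⁺(H) with ker F = {0}, ker G = {0}, and ran F^{1/2} ∩ ran G^{1/2} = {0} (i.e. the parallel sum F : G vanishes). Then there exists a closed subspace M of H such that M ∩ ran (F + G)^{1/2} = {0} and M⊥ ∩ ran (F + G)^{1/2} = {0}. -/
/-!
Write `T = (F + G)^{1/2}`, so that `‖F^{1/2} x‖² + ‖G^{1/2} x‖² = ‖T x‖²`. By Douglas' lemma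
`F^{1/2} = C₁ T` and `G^{1/2} = C₂ T` for bounded `C₁, C₂`; the positive operators
`S₁ = C₁* C₁` and `S₂ = C₂* C₂` then satisfy `F = T S₁ T`, `G = T S₂ T` and `S₁ + S₂ = 1`.
Since `T S₁ S₂ = F^{1/2} C₁ S₂` and `T S₂ S₁ = G^{1/2} C₂ S₁` coincide, the hypothesis
`ran F^{1/2} ∩ ran G^{1/2} = {0}` forces `S₂ S₁ = 0`, so `M = ker S₂` has `M⊥ ⊆ ker S₁`.
A vector `T y` in `ker S₂` (resp. `ker S₁`) has `G y = 0` (resp. `F y = 0`), hence is zero.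
-/

open ContinuousLinearMap

theorem LinearMap.ker_inf_range_eq_bot_of_injective_comp {R M N P : Type*} [Ring R]
    [AddCommGroup M] [AddCommGroup N] [AddCommGroup P] [Module R M] [Module R N] [Module R P]
    {f : M →ₗ[R] N} {g : N →ₗ[R] P} (h : Function.Injective (g ∘ₗ f)) :
    LinearMap.ker g ⊓ LinearMap.range f = ⊥ := by
  rw [inf_comm, ← Submodule.map_comap_eq, ← LinearMap.ker_comp, LinearMap.ker_eq_bot.mpr h,
    Submodule.map_bot]

theorem ContinuousLinearMap.exists_comp_eq_of_norm_apply_le {𝕜 E F G : Type*}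
    [NontriviallyNormedField 𝕜] [NormedAddCommGroup E] [NormedSpace 𝕜 E]
    [NormedAddCommGroup F] [NormedSpace 𝕜 F] [NormedAddCommGroup G] [NormedSpace 𝕜 G]
    [CompleteSpace G] {T : E →L[𝕜] F} {A : E →L[𝕜] G} (hT : DenseRange T) (c : ℝ)
    (h : ∀ x, ‖A x‖ ≤ c * ‖T x‖) : ∃ C : F →L[𝕜] G, C ∘L T = A :=
  ⟨(A : E →ₗ[𝕜] G).extendOfNorm (T : E →ₗ[𝕜] F),
    ext fun x => LinearMap.extendOfNorm_eq hT ⟨c, h⟩ x⟩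

namespace ContinuousLinearMap

variable {𝕜 E F G H : Type*} [RCLike 𝕜] [NormedAddCommGroup E] [InnerProductSpace 𝕜 E]
  [CompleteSpace E] [NormedAddCommGroup F] [InnerProductSpace 𝕜 F]
  [NormedAddCommGroup G] [InnerProductSpace 𝕜 G] [NormedAddCommGroup H] [InnerProductSpace 𝕜 H]

theorem norm_sq_apply_add_norm_sq_apply [CompleteSpace F] [CompleteSpace G] [CompleteSpace H]
    {A : E →L[𝕜] F} {B : E →L[𝕜] G} {T : E →L[𝕜] H}
    (h : adjoint A ∘L A + adjoint B ∘L B = adjoint T ∘L T) (x : E) :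
    ‖A x‖ ^ 2 + ‖B x‖ ^ 2 = ‖T x‖ ^ 2 := by
  rw [apply_norm_sq_eq_inner_adjoint_left, apply_norm_sq_eq_inner_adjoint_left,
    apply_norm_sq_eq_inner_adjoint_left, ← h, add_apply, inner_add_left, map_add]

theorem orthogonal_ker_le_ker_of_comp_eq_zero {P : E →L[𝕜] E} {Q : E →L[𝕜] F}
    (hP : IsSelfAdjoint P) (h : Q ∘L P = 0) :
    (LinearMap.ker (Q : E →ₗ[𝕜] F))ᗮ ≤ LinearMap.ker (P : E →ₗ[𝕜] E) := by
  have hPQ : LinearMap.range (P : E →ₗ[𝕜] E) ≤ LinearMap.ker (Q : E →ₗ[𝕜] F) := by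
    rintro _ ⟨x, rfl⟩
    exact congr($h x)
  simpa [orthogonal_range, hP.adjoint_eq] using Submodule.orthogonal_le hPQ

end ContinuousLinearMap

namespace IsSelfAdjoint

variable {𝕜 E : Type*} [RCLike 𝕜] [NormedAddCommGroup E] [InnerProductSpace 𝕜 E]
  [CompleteSpace E] {A B T : E →L[𝕜] E}

theorem denseRange_of_injective_s5 (hT : IsSelfAdjoint T) (hinj : Function.Injective T) :
    DenseRange T := by
  have h : (LinearMap.range (T : E →ₗ[𝕜] E))ᗮ = ⊥ := by
    rw [orthogonal_range, hT.adjoint_eq, LinearMap.ker_eq_bot.mpr hinj]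
  simpa [DenseRange, LinearMap.coe_range] using Submodule.dense_iff_topologicalClosure_eq_top.mpr
    (Submodule.topologicalClosure_eq_top_iff.mpr h)

theorem eq_of_mul_mul_eq_mul_mul (hT : IsSelfAdjoint T) (hinj : Function.Injective T)
    {X Y : E →L[𝕜] E} (h : T * X * T = T * Y * T) : X = Y := by
  have cancel : ∀ {X Y : E →L[𝕜] E}, T * X = T * Y → X = Y := fun h =>
    ext fun x => hinj congr($h x)
  have hright : X * T = Y * T := cancel (by simpa only [mul_assoc] using h)
  have hleft : T * star X = T * star Y := by
    simpa only [star_mul, hT.star_eq] using congrArg star hright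
  simpa only [star_star] using congrArg star (cancel hleft)

theorem norm_apply_le_of_mul_self_add_mul_self_eq (hA : IsSelfAdjoint A)
    (hB : IsSelfAdjoint B) (hT : IsSelfAdjoint T) (h : A * A + B * B = T * T) (x : E) :
    ‖A x‖ ≤ ‖T x‖ := by
  have hx := norm_sq_apply_add_norm_sq_apply (A := A) (B := B) (T := T)
    (by simpa only [hA.adjoint_eq, hB.adjoint_eq, hT.adjoint_eq, ← mul_def] using h) x
  nlinarith [norm_nonneg (A x), norm_nonneg (T x)]

theorem exists_mul_eq_and_star_mul_self_add_star_mul_self_eq_one (hA : IsSelfAdjoint A)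
    (hB : IsSelfAdjoint B) (hT : IsSelfAdjoint T) (hinj : Function.Injective T)
    (h : A * A + B * B = T * T) :
    ∃ C₁ C₂ : E →L[𝕜] E, C₁ * T = A ∧ C₂ * T = B ∧ star C₁ * C₁ + star C₂ * C₂ = 1 := by
  have hdense := hT.denseRange_of_injective_s5 hinj
  obtain ⟨C₁, hC₁⟩ := exists_comp_eq_of_norm_apply_le hdense 1 fun x => by
    simpa using hA.norm_apply_le_of_mul_self_add_mul_self_eq hB hT h x
  obtain ⟨C₂, hC₂⟩ := exists_comp_eq_of_norm_apply_le hdense 1 fun x => by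
    simpa using hB.norm_apply_le_of_mul_self_add_mul_self_eq hA hT ((add_comm _ _).trans h) x
  rw [← mul_def] at hC₁ hC₂
  refine ⟨C₁, C₂, hC₁, hC₂, hT.eq_of_mul_mul_eq_mul_mul hinj ?_⟩
  calc T * (star C₁ * C₁ + star C₂ * C₂) * T
      = star (C₁ * T) * (C₁ * T) + star (C₂ * T) * (C₂ * T) := by
        simp only [star_mul, hT.star_eq]
        noncomm_ring
    _ = T * 1 * T := by rw [hC₁, hC₂, hA.star_eq, hB.star_eq, h, mul_one]

theorem exists_isClosed_inf_range_eq_bot_and_orthogonal_inf_range_eq_bot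
    (hA : IsSelfAdjoint A) (hB : IsSelfAdjoint B) (hT : IsSelfAdjoint T)
    (hAinj : Function.Injective A) (hBinj : Function.Injective B) (h : A * A + B * B = T * T)
    (hdisj : LinearMap.range (A : E →ₗ[𝕜] E) ⊓ LinearMap.range (B : E →ₗ[𝕜] E) = ⊥) :
    ∃ M : Submodule 𝕜 E, IsClosed (M : Set E) ∧
      M ⊓ LinearMap.range (T : E →ₗ[𝕜] E) = ⊥ ∧ Mᗮ ⊓ LinearMap.range (T : E →ₗ[𝕜] E) = ⊥ := by
  have hTinj : Function.Injective T := (injective_iff_map_eq_zero T).mpr fun x hx =>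
    hAinj.eq_iff' (map_zero A) |>.mp <| norm_le_zero_iff.mp <| by
      simpa [hx] using hA.norm_apply_le_of_mul_self_add_mul_self_eq hB hT h x
  obtain ⟨C₁, C₂, hC₁, hC₂, hS⟩ :=
    hA.exists_mul_eq_and_star_mul_self_add_star_mul_self_eq_one hB hT hTinj h
  set S₁ := star C₁ * C₁
  set S₂ := star C₂ * C₂
  have hTS₁ : T * S₁ = A * C₁ := by rw [← mul_assoc, ← hT.star_eq, ← star_mul, hC₁, hA.star_eq]
  have hTS₂ : T * S₂ = B * C₂ := by rw [← mul_assoc, ← hT.star_eq, ← star_mul, hC₂, hB.star_eq]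
  have hS₂S₁ : S₂ * S₁ = 0 := by
    have hcomm : S₂ * S₁ = S₁ * S₂ := by
      rw [eq_sub_of_add_eq' hS]
      noncomm_ring
    ext x
    apply hTinj
    have hmem : T ((S₂ * S₁) x) ∈
        LinearMap.range (A : E →ₗ[𝕜] E) ⊓ LinearMap.range (B : E →ₗ[𝕜] E) :=
      ⟨⟨C₁ (S₂ x), by rw [hcomm]; exact congr($hTS₁ (S₂ x)).symm⟩,
        ⟨C₂ (S₁ x), congr($hTS₂ (S₁ x)).symm⟩⟩
    rw [hdisj] at hmem
    simpa using hmem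
  have hker {S X : E →L[𝕜] E} (hX : Function.Injective X) (hS : T * S * T = X * X) :
      LinearMap.ker (S : E →ₗ[𝕜] E) ⊓ LinearMap.range (T : E →ₗ[𝕜] E) = ⊥ := by
    have : Function.Injective (T * S * T) := hS ▸ hX.comp hX
    exact LinearMap.ker_inf_range_eq_bot_of_injective_comp (this.of_comp (f := T))
  refine ⟨LinearMap.ker (S₂ : E →ₗ[𝕜] E), S₂.isClosed_ker,
    hker hBinj (by rw [hTS₂, mul_assoc, hC₂]), eq_bot_iff.mpr ?_⟩
  exact (inf_le_inf_right _ (orthogonal_ker_le_ker_of_comp_eq_zero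
    (IsSelfAdjoint.star_mul_self C₁) hS₂S₁)).trans (hker hAinj (by rw [hTS₁, mul_assoc, hC₁])).le

end IsSelfAdjoint

theorem stmt_5_general
    {H : Type*} [NormedAddCommGroup H] [InnerProductSpace ℂ H] [CompleteSpace H]
    (F G sqrtF sqrtG sqrtFG : H →L[ℂ] H)
    (hFker : LinearMap.ker (F : H →ₗ[ℂ] H) = ⊥) (hGker : LinearMap.ker (G : H →ₗ[ℂ] H) = ⊥)
    (hsqrtF : sqrtF.IsPositive) (hsqrtF2 : sqrtF * sqrtF = F)
    (hsqrtG : sqrtG.IsPositive) (hsqrtG2 : sqrtG * sqrtG = G)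
    (hsqrtFG : sqrtFG.IsPositive) (hsqrtFG2 : sqrtFG * sqrtFG = F + G)
    (hdisj : LinearMap.range (sqrtF : H →ₗ[ℂ] H) ⊓ LinearMap.range (sqrtG : H →ₗ[ℂ] H) = ⊥) :
    ∃ M : Submodule ℂ H, IsClosed (M : Set H) ∧
      M ⊓ LinearMap.range (sqrtFG : H →ₗ[ℂ] H) = ⊥ ∧ Mᗮ ⊓ LinearMap.range (sqrtFG : H →ₗ[ℂ] H) = ⊥ := by
  have hFinj : Function.Injective (sqrtF * sqrtF) := hsqrtF2 ▸ LinearMap.ker_eq_bot.mp hFker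
  have hGinj : Function.Injective (sqrtG * sqrtG) := hsqrtG2 ▸ LinearMap.ker_eq_bot.mp hGker
  exact hsqrtF.isSelfAdjoint.exists_isClosed_inf_range_eq_bot_and_orthogonal_inf_range_eq_bot
    hsqrtG.isSelfAdjoint hsqrtFG.isSelfAdjoint (hFinj.of_comp (f := sqrtF))
    (hGinj.of_comp (f := sqrtG)) (by rw [hsqrtF2, hsqrtG2, hsqrtFG2]) hdisj

/-- Proposition 3.5, part 1): if `F, G ∈ B⁺(H)` have trivial kernels and
`ran F^{1/2} ∩ ran G^{1/2} = {0}` (i.e. the parallel sum `F : G` vanishes), then there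
is a closed subspace `M` of `H` with
`M ∩ ran (F + G)^{1/2} = M⊥ ∩ ran (F + G)^{1/2} = {0}`. -/
theorem stmt_5
    {H : Type*} [NormedAddCommGroup H] [InnerProductSpace ℂ H] [CompleteSpace H]
    [TopologicalSpace.SeparableSpace H] (hinf : ¬ FiniteDimensional ℂ H)
    (F G sqrtF sqrtG sqrtFG : H →L[ℂ] H)
    (hF : F.IsPositive) (hG : G.IsPositive)
    (hFker : LinearMap.ker (F : H →ₗ[ℂ] H) = ⊥) (hGker : LinearMap.ker (G : H →ₗ[ℂ] H) = ⊥)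
    (hsqrtF : sqrtF.IsPositive) (hsqrtF2 : sqrtF * sqrtF = F)
    (hsqrtG : sqrtG.IsPositive) (hsqrtG2 : sqrtG * sqrtG = G)
    (hsqrtFG : sqrtFG.IsPositive) (hsqrtFG2 : sqrtFG * sqrtFG = F + G)
    (hdisj : LinearMap.range (sqrtF : H →ₗ[ℂ] H) ⊓ LinearMap.range (sqrtG : H →ₗ[ℂ] H) = ⊥) :
    ∃ M : Submodule ℂ H, IsClosed (M : Set H) ∧
      M ⊓ LinearMap.range (sqrtFG : H →ₗ[ℂ] H) = ⊥ ∧ Mᗮ ⊓ LinearMap.range (sqrtFG : H →ₗ[ℂ] H) = ⊥ :=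
  stmt_5_general F G sqrtF sqrtG sqrtFG hFker hGker hsqrtF hsqrtF2 hsqrtG hsqrtG2 hsqrtFG hsqrtFG2
    hdisj
end

section
/- Let W ∈ B₀⁺(H) with ran W ≠ H, and let L be a closed subspace of H such that L ∩ ran W^{1/2} = {0} and L⊥ ∩ ran W^{1/2} = {0}. Define V₂ := W^{1/2}(I + P_L)W^{1/2}. Then ran V₂^{1/2} = ran W^{1/2} and ran V₂ ∩ ran W = {0}. Also, the operator V₁ := W^{1/2} P_L W^{1/2} satisfies ran V₁^{1/2} ∩ ran W = {0} and ran V₁ ⊆ ran W^{1/2}. -/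
/-!
Douglas' lemma: if `‖A x‖ ≤ C ‖B x‖` for all `x`, then `A = D B` for a bounded `D`, hence
`ran A* ⊆ ran B*`. Since `P` is an orthogonal projection, `‖V₂^{1/2} x‖² = ‖W^{1/2} x‖² +
‖P W^{1/2} x‖²` and `‖V₁^{1/2} x‖ = ‖P W^{1/2} x‖`, which gives `ran V₂^{1/2} = ran W^{1/2}` and
`ran V₁^{1/2} ⊆ ran W^{1/2} P`. As `W^{1/2}` is injective and `ran W = W^{1/2}(ran W^{1/2})`, the
two intersections with `ran W` vanish once `L ∩ ran W^{1/2} = {0}` and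
`(I + P)(ran W^{1/2}) ∩ ran W^{1/2} = {0}`. For the latter, if `u` and `u + P u` lie in
`ran W^{1/2}` then `P u ∈ L ∩ ran W^{1/2} = {0}`, so `u ∈ L⊥ ∩ ran W^{1/2} = {0}`.
-/

open ContinuousLinearMap

section Douglas

variable {𝕜 E F G : Type*} [RCLike 𝕜]
  [NormedAddCommGroup E] [InnerProductSpace 𝕜 E]
  [NormedAddCommGroup F] [InnerProductSpace 𝕜 F] [CompleteSpace F]
  [NormedAddCommGroup G] [InnerProductSpace 𝕜 G] [CompleteSpace G]

/- `A` factors through `B` on `ran B`; extend by continuity to the closure of `ran B` and by zero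
on its orthogonal complement. -/
theorem ContinuousLinearMap.exists_comp_eq_of_norm_le {A : E →L[𝕜] G} {B : E →L[𝕜] F} {C : ℝ}
    (h : ∀ x, ‖A x‖ ≤ C * ‖B x‖) : ∃ D : F →L[𝕜] G, D ∘L B = A := by
  set K := (B : E →ₗ[𝕜] F).range.topologicalClosure
  let e : E →ₗ[𝕜] K :=
    (B : E →ₗ[𝕜] F).codRestrict K fun x ↦ Submodule.le_topologicalClosure _ ⟨x, rfl⟩
  have he : DenseRange e := by
    refine Subtype.dense_iff.mpr ?_
    rw [← Set.range_comp]
    exact (Submodule.topologicalClosure_coe _).le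
  refine ⟨(A : E →ₗ[𝕜] G).extendOfNorm e ∘L K.orthogonalProjectionOnto, ?_⟩
  ext x
  have hproj : K.orthogonalProjectionOnto (B x) = e x :=
    K.orthogonalProjectionOnto_mem_subspace_eq_self (e x)
  simp only [comp_apply, hproj]
  exact LinearMap.extendOfNorm_eq he ⟨C, h⟩ x

theorem ContinuousLinearMap.range_adjoint_le_of_norm_le [CompleteSpace E]
    {A : E →L[𝕜] G} {B : E →L[𝕜] F} {C : ℝ} (h : ∀ x, ‖A x‖ ≤ C * ‖B x‖) :
    (adjoint A : G →ₗ[𝕜] E).range ≤ (adjoint B : F →ₗ[𝕜] E).range := by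
  obtain ⟨D, rfl⟩ := exists_comp_eq_of_norm_le h
  rw [adjoint_comp]
  exact LinearMap.range_comp_le_range _ _

end Douglas

section SelfAdjoint

variable {𝕜 E : Type*} [RCLike 𝕜] [NormedAddCommGroup E] [InnerProductSpace 𝕜 E] [CompleteSpace E]

theorem IsSelfAdjoint.range_le_of_norm_le {S T : E →L[𝕜] E} (hS : IsSelfAdjoint S)
    (hT : IsSelfAdjoint T) {C : ℝ} (h : ∀ x, ‖S x‖ ≤ C * ‖T x‖) :
    (S : E →ₗ[𝕜] E).range ≤ (T : E →ₗ[𝕜] E).range := by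
  simpa only [hS.adjoint_eq, hT.adjoint_eq] using range_adjoint_le_of_norm_le h

theorem IsSelfAdjoint.norm_sq_apply_eq_add {S R Q : E →L[𝕜] E} (hS : IsSelfAdjoint S)
    (h : S * S = adjoint R * R + adjoint Q * Q) (x : E) :
    ‖S x‖ ^ 2 = ‖R x‖ ^ 2 + ‖Q x‖ ^ 2 := by
  have hSS : S * S = adjoint S * S := by rw [hS.adjoint_eq]
  rw [apply_norm_sq_eq_inner_adjoint_left, apply_norm_sq_eq_inner_adjoint_left,
    apply_norm_sq_eq_inner_adjoint_left, ← map_add, ← inner_add_left]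
  simp only [← mul_def, ← hSS, h, add_apply]

theorem IsSelfAdjoint.norm_apply_eq {S R : E →L[𝕜] E} (hS : IsSelfAdjoint S)
    (h : S * S = adjoint R * R) (x : E) : ‖S x‖ = ‖R x‖ := by
  have := hS.norm_sq_apply_eq_add (Q := 0) (by simpa using h) x
  simpa [sq_eq_sq₀ (norm_nonneg _) (norm_nonneg _)] using this

theorem IsSelfAdjoint.mul_mul_eq_adjoint_mul_self {T P : E →L[𝕜] E} (hT : IsSelfAdjoint T)
    (hP : IsSelfAdjoint P) (hPidem : P * P = P) :
    T * P * T = adjoint (P * T) * (P * T) := by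
  rw [← star_eq_adjoint, star_mul, hT.star_eq, hP.star_eq, ← mul_assoc, mul_assoc T P P, hPidem]

theorem IsSelfAdjoint.map_one_add_inf_eq_bot {P : E →L[𝕜] E} (hP : IsSelfAdjoint P)
    {M : Submodule 𝕜 E} (hM : (P : E →ₗ[𝕜] E).range ⊓ M = ⊥)
    (hM' : (P : E →ₗ[𝕜] E).rangeᗮ ⊓ M = ⊥) :
    M.map ((1 + P : E →L[𝕜] E) : E →ₗ[𝕜] E) ⊓ M = ⊥ := by
  refine eq_bot_iff.mpr ?_
  rintro v ⟨⟨u, hu, rfl⟩, hv⟩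
  have hPu : P u = 0 := by
    refine (Submodule.mem_bot 𝕜).mp (hM ▸ ⟨⟨u, rfl⟩, ?_⟩)
    simpa using M.sub_mem hv hu
  have hu0 : u = 0 := by
    refine (Submodule.mem_bot 𝕜).mp (hM' ▸ ⟨?_, hu⟩)
    rw [orthogonal_range, hP.adjoint_eq]
    exact hPu
  simp [hu0]

end SelfAdjoint

theorem LinearMap.range_comp_inf_range_comp_eq_bot {R M₁ M₂ M N : Type*} [Semiring R]
    [AddCommMonoid M₁] [AddCommMonoid M₂] [AddCommMonoid M] [AddCommMonoid N]
    [Module R M₁] [Module R M₂] [Module R M] [Module R N] {T : M →ₗ[R] N}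
    (hT : Function.Injective T) {A : M₁ →ₗ[R] M} {B : M₂ →ₗ[R] M} (h : A.range ⊓ B.range = ⊥) :
    (T ∘ₗ A).range ⊓ (T ∘ₗ B).range = ⊥ := by
  rw [range_comp, range_comp, ← Submodule.map_inf _ hT, h, Submodule.map_bot]

theorem stmt_19_general
    {H : Type*} [NormedAddCommGroup H] [InnerProductSpace ℂ H] [CompleteSpace H]
    (W sqrtW : H →L[ℂ] H)
    (hWker : LinearMap.ker (W : H →ₗ[ℂ] H) = ⊥)
    (hsqrtW : sqrtW.IsPositive) (hsqrtW2 : sqrtW * sqrtW = W)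
    (L : Submodule ℂ H)
    (hL : L ⊓ LinearMap.range (sqrtW : H →ₗ[ℂ] H) = ⊥) (hL' : Lᗮ ⊓ LinearMap.range (sqrtW : H →ₗ[ℂ] H) = ⊥)
    (P : H →L[ℂ] H) (hP : IsSelfAdjoint P) (hPidem : P * P = P)
    (hPran : LinearMap.range (P : H →ₗ[ℂ] H) = L)
    (sqrtV₁ sqrtV₂ : H →L[ℂ] H)
    (hsqrtV₁ : sqrtV₁.IsPositive) (hsqrtV₁2 : sqrtV₁ * sqrtV₁ = sqrtW * P * sqrtW)
    (hsqrtV₂ : sqrtV₂.IsPositive)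
    (hsqrtV₂2 : sqrtV₂ * sqrtV₂ = sqrtW * (1 + P) * sqrtW) :
    LinearMap.range (sqrtV₂ : H →ₗ[ℂ] H) = LinearMap.range (sqrtW : H →ₗ[ℂ] H) ∧
    LinearMap.range ((sqrtW * (1 + P) * sqrtW : H →L[ℂ] H) : H →ₗ[ℂ] H) ⊓ LinearMap.range (W : H →ₗ[ℂ] H) = ⊥ ∧
    LinearMap.range (sqrtV₁ : H →ₗ[ℂ] H) ⊓ LinearMap.range (W : H →ₗ[ℂ] H) = ⊥ ∧
    LinearMap.range ((sqrtW * P * sqrtW : H →L[ℂ] H) : H →ₗ[ℂ] H) ≤ LinearMap.range (sqrtW : H →ₗ[ℂ] H) := by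
  subst hsqrtW2 hPran
  have hT := hsqrtW.isSelfAdjoint
  have hinj : Function.Injective sqrtW :=
    Function.Injective.of_comp (f := sqrtW) (LinearMap.ker_eq_bot.mp hWker)
  have hV₂ : ∀ x, ‖sqrtV₂ x‖ ^ 2 = ‖sqrtW x‖ ^ 2 + ‖P (sqrtW x)‖ ^ 2 :=
    hsqrtV₂.isSelfAdjoint.norm_sq_apply_eq_add (R := sqrtW) (Q := P * sqrtW) <| by
      rw [hsqrtV₂2, mul_add, add_mul, mul_one, hT.mul_mul_eq_adjoint_mul_self hP hPidem,
        hT.adjoint_eq]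
  have hV₁ : ∀ x, ‖sqrtV₁ x‖ = ‖(P * sqrtW) x‖ :=
    hsqrtV₁.isSelfAdjoint.norm_apply_eq (hsqrtV₁2.trans (hT.mul_mul_eq_adjoint_mul_self hP hPidem))
  have hV₁_le : (sqrtV₁ : H →ₗ[ℂ] H).range ≤ (sqrtW * P : H →L[ℂ] H).range := by
    have := range_adjoint_le_of_norm_le (C := 1) fun x ↦ (hV₁ x).trans_le (one_mul _).symm.le
    rwa [hsqrtV₁.isSelfAdjoint.adjoint_eq, ← star_eq_adjoint, star_mul, hT.star_eq,
      hP.star_eq] at this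
  refine ⟨le_antisymm ?_ ?_, ?_, ?_, ?_⟩
  · refine hsqrtV₂.isSelfAdjoint.range_le_of_norm_le hT (C := 1 + ‖P‖) fun x ↦ ?_
    have := le_opNorm P (sqrtW x)
    nlinarith [hV₂ x, norm_nonneg (sqrtV₂ x), norm_nonneg (sqrtW x), norm_nonneg (P (sqrtW x))]
  · refine hT.range_le_of_norm_le hsqrtV₂.isSelfAdjoint (C := 1) fun x ↦ ?_
    nlinarith [hV₂ x, norm_nonneg (sqrtV₂ x), norm_nonneg (sqrtW x)]
  · rw [mul_assoc]
    refine LinearMap.range_comp_inf_range_comp_eq_bot hinj ?_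
    rw [← hP.map_one_add_inf_eq_bot hL hL', ← LinearMap.range_comp]
    rfl
  · exact eq_bot_iff.mpr <| (inf_le_inf_right _ hV₁_le).trans_eq
      (LinearMap.range_comp_inf_range_comp_eq_bot hinj hL)
  · rw [mul_assoc]
    exact LinearMap.range_comp_le_range _ _

/-- Section 3.2, examples (a),(b): let `W ∈ B₀⁺(H)` with `ran W ≠ H` and let `L` be a
closed subspace with `L ∩ ran W^{1/2} = L⊥ ∩ ran W^{1/2} = {0}` (with `P := P_L`).
Then `V₂ := W^{1/2}(I + P_L)W^{1/2}` satisfies `ran V₂^{1/2} = ran W^{1/2}` and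
`ran V₂ ∩ ran W = {0}`, and `V₁ := W^{1/2} P_L W^{1/2}` satisfies
`ran V₁^{1/2} ∩ ran W = {0}` and `ran V₁ ⊆ ran W^{1/2}`. -/
theorem stmt_19
    {H : Type*} [NormedAddCommGroup H] [InnerProductSpace ℂ H] [CompleteSpace H]
    [TopologicalSpace.SeparableSpace H] (hinf : ¬ FiniteDimensional ℂ H)
    (W sqrtW : H →L[ℂ] H)
    (hW : W.IsPositive) (hWker : LinearMap.ker (W : H →ₗ[ℂ] H) = ⊥) (hWran : LinearMap.range (W : H →ₗ[ℂ] H) ≠ ⊤)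
    (hsqrtW : sqrtW.IsPositive) (hsqrtW2 : sqrtW * sqrtW = W)
    (L : Submodule ℂ H) (hLc : IsClosed (L : Set H))
    (hL : L ⊓ LinearMap.range (sqrtW : H →ₗ[ℂ] H) = ⊥) (hL' : Lᗮ ⊓ LinearMap.range (sqrtW : H →ₗ[ℂ] H) = ⊥)
    (P : H →L[ℂ] H) (hP : IsSelfAdjoint P) (hPidem : P * P = P)
    (hPran : LinearMap.range (P : H →ₗ[ℂ] H) = L)
    (sqrtV₁ sqrtV₂ : H →L[ℂ] H)
    (hsqrtV₁ : sqrtV₁.IsPositive) (hsqrtV₁2 : sqrtV₁ * sqrtV₁ = sqrtW * P * sqrtW)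
    (hsqrtV₂ : sqrtV₂.IsPositive)
    (hsqrtV₂2 : sqrtV₂ * sqrtV₂ = sqrtW * (1 + P) * sqrtW) :
    LinearMap.range (sqrtV₂ : H →ₗ[ℂ] H) = LinearMap.range (sqrtW : H →ₗ[ℂ] H) ∧
    LinearMap.range ((sqrtW * (1 + P) * sqrtW : H →L[ℂ] H) : H →ₗ[ℂ] H) ⊓ LinearMap.range (W : H →ₗ[ℂ] H) = ⊥ ∧
    LinearMap.range (sqrtV₁ : H →ₗ[ℂ] H) ⊓ LinearMap.range (W : H →ₗ[ℂ] H) = ⊥ ∧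
    LinearMap.range ((sqrtW * P * sqrtW : H →L[ℂ] H) : H →ₗ[ℂ] H) ≤ LinearMap.range (sqrtW : H →ₗ[ℂ] H) :=
  stmt_19_general W sqrtW hWker hsqrtW hsqrtW2 L hL hL' P hP hPidem hPran sqrtV₁ sqrtV₂ hsqrtV₁
    hsqrtV₁2 hsqrtV₂ hsqrtV₂2
end
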